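/- In the logistic regression model, F(θ) = −(1/n) Σ_{i=1}^n log P_θ(Y_i = y_i) + τ‖θ‖² − (1/2) log(2πσ²) for every θ ∈ R^d; in particular, F and the penalized normalized negative log-likelihood G(θ) := −(1/n) Σ_{i=1}^n log P_θ(Y_i = y_i) + τ‖θ‖² differ by a constant and have the same minimizers. -/

import Mathlib

/-!
Both sides reduce to the same one-dimensional integrals
`J_i = ∫ (1 + exp(-y_i ‖X_i‖ t))⁻¹ exp(-(t - ⟨X_i, θ⟩/‖X_i‖)² / (2σ²)) dt`.
In `P_θ(Y_i = y_i)`, rotating `X_i / ‖X_i‖` onto a coordinate axis factorises the Gaussian: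
the `d - 1` orthogonal directions contribute `√(2πσ²)` each, leaving `(2πσ²)^{-1/2} J_i`.
In `F`, completing the square in `⟨𝗌_i(z), θ⟩ - z²/(2σ²)` gives `exp(⟨X_i, θ⟩²/(2σ²‖X_i‖²)) J_i`,
and these exponential factors are cancelled exactly by the data part of `R(θ)`, whose remaining
part is `τ‖θ‖²`.
-/

open Matrix Real
open scoped BigOperators

noncomputable section

/-- `‖X_i‖`, the Euclidean norm of the covariate vector. -/
def nrmX {d : ℕ} (Xi : Fin d → ℝ) : ℝ := Real.sqrt (Xi ⬝ᵥ Xi)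

/-- `𝗌_i(z) := z X_i / (‖X_i‖ σ²)`. -/
def sStat {d : ℕ} (Xi : Fin d → ℝ) (σ : ℝ) (z : ℝ) : Fin d → ℝ :=
  (z / (nrmX Xi * σ ^ 2)) • Xi

/-- `Ω := ((1/(σ²n)) ∑_i X_i X_iᵀ/‖X_i‖² + 2τ I_d)⁻¹`. -/
def OmegaMat (d n : ℕ) (X : Fin n → Fin d → ℝ) (σ τ : ℝ) : Matrix (Fin d) (Fin d) ℝ :=
  ((σ ^ 2 * (n : ℝ))⁻¹ • ∑ i, (X i ⬝ᵥ X i)⁻¹ • vecMulVec (X i) (X i)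
      + (2 * τ) • (1 : Matrix (Fin d) (Fin d) ℝ))⁻¹

/-- `R(θ) := (1/2) θᵀ Ω⁻¹ θ`. -/
def Rpen (d n : ℕ) (X : Fin n → Fin d → ℝ) (σ τ : ℝ) (θ : Fin d → ℝ) : ℝ :=
  (1 / 2) * (θ ⬝ᵥ (OmegaMat d n X σ τ)⁻¹.mulVec θ)

/-- The objective `F`: normalized negative penalized log-likelihood of the logistic
regression model with Gaussian predictors, written with one-dimensional integrals. -/
def Fobj (d n : ℕ) (X : Fin n → Fin d → ℝ) (y : Fin n → ℝ) (σ τ : ℝ) (θ : Fin d → ℝ) : ℝ :=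
  -(n : ℝ)⁻¹ * ∑ i, Real.log (∫ z : ℝ,
      (1 + Real.exp (-(y i * nrmX (X i) * z)))⁻¹ * Real.exp (sStat (X i) σ z ⬝ᵥ θ)
        * Real.exp (-z ^ 2 / (2 * σ ^ 2)))
    + Rpen d n X σ τ θ

/-- The model probability `P_θ(Y_i = y)`:
`(2πσ²)^{−d/2} ∫_{ℝ^d} (1 + exp(−y⟨X_i,z⟩))⁻¹ exp(−‖z−θ‖²/(2σ²)) dz`. -/
def modelProb (d : ℕ) (Xi : Fin d → ℝ) (σ : ℝ) (y : ℝ) (θ : Fin d → ℝ) : ℝ :=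
  (2 * π * σ ^ 2) ^ (-(d : ℝ) / 2)
    * ∫ z : Fin d → ℝ, (1 + Real.exp (-(y * (Xi ⬝ᵥ z))))⁻¹
        * Real.exp (-((z - θ) ⬝ᵥ (z - θ)) / (2 * σ ^ 2))

/-- `G(θ) := −(1/n) ∑_i log P_θ(Y_i = y_i) + τ‖θ‖²`, the penalized normalized negative
log-likelihood. -/
def Gobj (d n : ℕ) (X : Fin n → Fin d → ℝ) (y : Fin n → ℝ) (σ τ : ℝ) (θ : Fin d → ℝ) : ℝ :=
  -(n : ℝ)⁻¹ * ∑ i, Real.log (modelProb d (X i) σ (y i) θ) + τ * (θ ⬝ᵥ θ)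

open MeasureTheory
open scoped RealInnerProductSpace

lemma rpow_neg_div_two_mul_sqrt_pow {A : ℝ} (hA : 0 < A) {d : ℕ} (hd : d ≠ 0) :
    A ^ (-(d : ℝ) / 2) * √A ^ (d - 1) = (√A)⁻¹ := by
  rw [sqrt_eq_rpow, ← rpow_natCast, ← rpow_mul hA.le, ← rpow_add hA, ← rpow_neg hA.le,
    Nat.cast_sub (Nat.one_le_iff_ne_zero.mpr hd)]
  congr 1
  push_cast
  ring

section Gaussian

variable {σ : ℝ}

lemma integral_exp_neg_sq_sub_div (c : ℝ) (hσ : σ ≠ 0) :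
    ∫ t : ℝ, exp (-(t - c) ^ 2 / (2 * σ ^ 2)) = √(2 * π * σ ^ 2) := by
  simp_rw [neg_div, div_eq_inv_mul _ (2 * σ ^ 2), ← neg_mul]
  rw [integral_sub_right_eq_self (fun t => exp (-(2 * σ ^ 2)⁻¹ * t ^ 2)) c, integral_gaussian]
  congr 1
  field_simp

lemma integrable_exp_neg_sq_sub_div (c : ℝ) (hσ : σ ≠ 0) :
    Integrable fun t : ℝ => exp (-(t - c) ^ 2 / (2 * σ ^ 2)) := by
  simp_rw [neg_div, div_eq_inv_mul _ (2 * σ ^ 2), ← neg_mul]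
  exact (integrable_exp_neg_mul_sq (by positivity)).comp_sub_right c

lemma integral_mul_exp_neg_sq_sub_div_pos {f : ℝ → ℝ} (hf : Continuous f)
    (hf_pos : ∀ t, 0 < f t) (hf_le : ∀ t, f t ≤ 1) (c : ℝ) (hσ : σ ≠ 0) :
    0 < ∫ t, f t * exp (-(t - c) ^ 2 / (2 * σ ^ 2)) := by
  have hint : Integrable fun t => f t * exp (-(t - c) ^ 2 / (2 * σ ^ 2)) :=
    (integrable_exp_neg_sq_sub_div c hσ).bdd_mul hf.aestronglyMeasurable
      (.of_forall fun t => by rw [Real.norm_of_nonneg (hf_pos t).le]; exact hf_le t)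
  have hsupp : Function.support (fun t => f t * exp (-(t - c) ^ 2 / (2 * σ ^ 2))) = Set.univ :=
    Set.eq_univ_of_forall fun t => (mul_pos (hf_pos t) (exp_pos _)).ne'
  rw [integral_pos_iff_support_of_nonneg (fun t => (mul_pos (hf_pos t) (exp_pos _)).le) hint,
    hsupp]
  simp

lemma integral_mul_exp_mul_div_mul_exp_neg_sq (g : ℝ → ℝ) (m : ℝ) (hσ : σ ≠ 0) :
    ∫ t, g t * exp (t * m / σ ^ 2) * exp (-t ^ 2 / (2 * σ ^ 2))
      = exp (m ^ 2 / (2 * σ ^ 2)) * ∫ t, g t * exp (-(t - m) ^ 2 / (2 * σ ^ 2)) := by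
  rw [← integral_const_mul]
  congr 1 with t
  rw [mul_assoc, ← exp_add, mul_left_comm, ← exp_add]
  -- completing the square: `t m / σ² - t² / (2σ²) = m² / (2σ²) - (t - m)² / (2σ²)`
  congr 2
  field_simp
  ring

end Gaussian

section Rotation

variable {σ : ℝ}

lemma integral_mul_exp_neg_sum_sq_sub {ι : Type*} [Fintype ι] [DecidableEq ι] (f : ℝ → ℝ)
    (i₀ : ι) (c : ι → ℝ) (hσ : σ ≠ 0) :
    ∫ x : ι → ℝ, f (x i₀) * exp (-(∑ j, (x j - c j) ^ 2) / (2 * σ ^ 2))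
      = √(2 * π * σ ^ 2) ^ (Fintype.card ι - 1)
          * ∫ t, f t * exp (-(t - c i₀) ^ 2 / (2 * σ ^ 2)) := by
  set g : ι → ℝ → ℝ := fun j t => (if j = i₀ then f t else 1) * exp (-(t - c j) ^ 2 / (2 * σ ^ 2))
  have hprod : ∀ x : ι → ℝ, f (x i₀) * exp (-(∑ j, (x j - c j) ^ 2) / (2 * σ ^ 2))
      = ∏ j, g j (x j) := by
    intro x
    rw [Finset.prod_mul_distrib, Finset.prod_ite_eq', if_pos (Finset.mem_univ _), ← exp_sum,
      ← Finset.sum_div, ← Finset.sum_neg_distrib]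
  have hfactor : ∀ j ∈ Finset.univ.erase i₀, ∫ t, g j t = √(2 * π * σ ^ 2) := fun j hj => by
    simp only [g, if_neg (Finset.ne_of_mem_erase hj), one_mul, integral_exp_neg_sq_sub_div _ hσ]
  simp_rw [hprod]
  rw [integral_fintype_prod_volume_eq_prod, ← Finset.mul_prod_erase _ _ (Finset.mem_univ i₀),
    Finset.prod_congr rfl hfactor, Finset.prod_const, Finset.card_erase_of_mem (Finset.mem_univ _),
    Finset.card_univ, mul_comm]
  simp only [g, ↓reduceIte]

lemma integral_comp_inner_mul_exp_neg_norm_sq {E : Type*} [NormedAddCommGroup E]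
    [InnerProductSpace ℝ E] [FiniteDimensional ℝ E] [MeasurableSpace E] [BorelSpace E]
    (f : ℝ → ℝ) {u : E} (hu : ‖u‖ = 1) (θ : E) (hσ : σ ≠ 0) :
    ∫ z : E, f ⟪u, z⟫ * exp (-‖z - θ‖ ^ 2 / (2 * σ ^ 2))
      = √(2 * π * σ ^ 2) ^ (Module.finrank ℝ E - 1)
          * ∫ t, f t * exp (-(t - ⟪u, θ⟫) ^ 2 / (2 * σ ^ 2)) := by
  -- in the coordinates of an orthonormal basis extending `u`, the integrand factorises
  have : Nontrivial E := ⟨⟨u, 0, fun h => by simp [h] at hu⟩⟩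
  set i₀ : Fin (Module.finrank ℝ E) := ⟨0, Module.finrank_pos⟩
  have hu_on : Orthonormal ℝ (({i₀} : Set _).domRestrict fun _ => u) :=
    ⟨fun _ => hu, fun i j hij => (hij (Subtype.ext (i.2.trans j.2.symm))).elim⟩
  obtain ⟨b, hb⟩ := hu_on.exists_orthonormalBasis_extension_of_card_eq (by simp)
  have hb₀ : b i₀ = u := hb i₀ rfl
  have hrot : ∀ w, f ⟪u, b.repr.symm w⟫ * exp (-‖b.repr.symm w - θ‖ ^ 2 / (2 * σ ^ 2))
      = f (w i₀) * exp (-(∑ j, (w j - b.repr θ j) ^ 2) / (2 * σ ^ 2)) := by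
    intro w
    rw [← hb₀, ← OrthonormalBasis.repr_apply_apply, LinearIsometryEquiv.apply_symm_apply,
      ← b.repr.norm_map, map_sub, LinearIsometryEquiv.apply_symm_apply,
      EuclideanSpace.real_norm_sq_eq]
    rfl
  rw [← b.measurePreserving_repr_symm.integral_comp b.repr.symm.toHomeomorph.measurableEmbedding]
  simp_rw [hrot]
  refine ((EuclideanSpace.volume_preserving_symm_measurableEquiv_toLp _).integral_comp'
      (fun x : Fin _ → ℝ => f (x i₀) * exp (-(∑ j, (x j - b.repr θ j) ^ 2) / (2 * σ ^ 2)))).trans ?_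
  rw [integral_mul_exp_neg_sum_sq_sub f i₀ _ hσ, Fintype.card_fin, ← hb₀,
    OrthonormalBasis.repr_apply_apply]

end Rotation

section Model

variable {d : ℕ} {σ : ℝ}

lemma nrmX_eq_norm_toLp (v : Fin d → ℝ) :
    nrmX v = ‖(WithLp.toLp 2 v : EuclideanSpace ℝ (Fin d))‖ := by
  rw [norm_eq_sqrt_real_inner]
  rfl

lemma nrmX_pos {v : Fin d → ℝ} (hv : v ≠ 0) : 0 < nrmX v := by
  rw [nrmX_eq_norm_toLp, norm_pos_iff]
  exact (WithLp.toLp_eq_zero 2).not.mpr hv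

lemma sq_nrmX (v : Fin d → ℝ) : nrmX v ^ 2 = v ⬝ᵥ v :=
  sq_sqrt (Finset.sum_nonneg fun j _ => mul_self_nonneg (v j))

lemma dotProduct_eq_inner_toLp {ι : Type*} [Fintype ι] (x y : ι → ℝ) :
    x ⬝ᵥ y = ⟪(WithLp.toLp 2 x : EuclideanSpace ℝ ι), WithLp.toLp 2 y⟫ := by
  rw [EuclideanSpace.inner_toLp_toLp, star_trivial, dotProduct_comm]

lemma integral_comp_dotProduct_mul_exp_neg (f : ℝ → ℝ) {v : Fin d → ℝ} (hv : v ≠ 0)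
    (θ : Fin d → ℝ) (hσ : σ ≠ 0) :
    ∫ z : Fin d → ℝ, f (v ⬝ᵥ z) * exp (-((z - θ) ⬝ᵥ (z - θ)) / (2 * σ ^ 2))
      = √(2 * π * σ ^ 2) ^ (d - 1)
          * ∫ t, f (nrmX v * t) * exp (-(t - v ⬝ᵥ θ / nrmX v) ^ 2 / (2 * σ ^ 2)) := by
  set s := nrmX v
  have hs : 0 < s := nrmX_pos hv
  set u : EuclideanSpace ℝ (Fin d) := s⁻¹ • WithLp.toLp 2 v
  have hu : ‖u‖ = 1 := by
    rw [norm_smul, ← nrmX_eq_norm_toLp, norm_inv, Real.norm_of_nonneg hs.le,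
      inv_mul_cancel₀ hs.ne']
  have hinner : ∀ z, v ⬝ᵥ z = s * ⟪u, WithLp.toLp 2 z⟫ := fun z => by
    rw [real_inner_smul_left, ← dotProduct_eq_inner_toLp, mul_inv_cancel_left₀ hs.ne']
  have hsq : ∀ z, (z - θ) ⬝ᵥ (z - θ)
      = ‖(WithLp.toLp 2 z : EuclideanSpace ℝ (Fin d)) - WithLp.toLp 2 θ‖ ^ 2 := fun z => by
    rw [← WithLp.toLp_sub, ← real_inner_self_eq_norm_sq, ← dotProduct_eq_inner_toLp]
  simp_rw [hinner, hsq]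
  refine ((EuclideanSpace.volume_preserving_symm_measurableEquiv_toLp _).symm.integral_comp'
    (fun w => f (s * ⟪u, w⟫) * exp (-‖w - WithLp.toLp 2 θ‖ ^ 2 / (2 * σ ^ 2)))).trans ?_
  rw [integral_comp_inner_mul_exp_neg_norm_sq (fun t => f (s * t)) hu _ hσ,
    finrank_euclideanSpace_fin, mul_div_cancel_left₀ _ hs.ne']

end Model

section Likelihood

variable {d : ℕ} {σ : ℝ}

/-- `√(2πσ²) · 𝔼[(1 + exp(-a T))⁻¹]` for `T ∼ 𝒩(m, σ²)`. -/
def logisticGaussianIntegral (a m σ : ℝ) : ℝ :=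
  ∫ t, (1 + exp (-(a * t)))⁻¹ * exp (-(t - m) ^ 2 / (2 * σ ^ 2))

lemma logisticGaussianIntegral_pos (a m : ℝ) (hσ : σ ≠ 0) :
    0 < logisticGaussianIntegral a m σ :=
  integral_mul_exp_neg_sq_sub_div_pos (by fun_prop (disch := intro; positivity))
    (fun _ => by positivity)
    (fun _ => inv_le_one_of_one_le₀ (le_add_of_nonneg_right (exp_pos _).le)) m hσ

lemma log_modelProb {Xi : Fin d → ℝ} (hXi : Xi ≠ 0) (y : ℝ) (θ : Fin d → ℝ) (hσ : σ ≠ 0) :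
    log (modelProb d Xi σ y θ) = -(1 / 2) * log (2 * π * σ ^ 2)
      + log (logisticGaussianIntegral (y * nrmX Xi) (Xi ⬝ᵥ θ / nrmX Xi) σ) := by
  have hA : 0 < 2 * π * σ ^ 2 := by positivity
  have hd : d ≠ 0 := by
    rintro rfl
    exact hXi (Subsingleton.elim _ _)
  simp_rw [modelProb,
    integral_comp_dotProduct_mul_exp_neg (fun t => (1 + exp (-(y * t)))⁻¹) hXi θ hσ, ← mul_assoc, rpow_neg_div_two_mul_sqrt_pow hA hd]
  rw [← logisticGaussianIntegral, log_mul (by positivity) (logisticGaussianIntegral_pos _ _ hσ).ne',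
    log_inv, log_sqrt hA.le]
  ring

lemma log_integral_sStat (Xi : Fin d → ℝ) (a : ℝ) (θ : Fin d → ℝ) (hσ : σ ≠ 0) :
    log (∫ z : ℝ, (1 + exp (-(a * z)))⁻¹ * exp (sStat Xi σ z ⬝ᵥ θ) * exp (-z ^ 2 / (2 * σ ^ 2)))
      = (Xi ⬝ᵥ θ) ^ 2 / (Xi ⬝ᵥ Xi) / (2 * σ ^ 2)
        + log (logisticGaussianIntegral a (Xi ⬝ᵥ θ / nrmX Xi) σ) := by
  have hdot : ∀ z, sStat Xi σ z ⬝ᵥ θ = z * (Xi ⬝ᵥ θ / nrmX Xi) / σ ^ 2 := fun z => by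
    rw [sStat, smul_dotProduct, smul_eq_mul]
    ring
  simp_rw [hdot]
  rw [integral_mul_exp_mul_div_mul_exp_neg_sq _ _ hσ, ← logisticGaussianIntegral,
    log_mul (exp_pos _).ne' (logisticGaussianIntegral_pos _ _ hσ).ne', log_exp, div_pow, sq_nrmX]

end Likelihood

section Penalty

variable {d n : ℕ} (X : Fin n → Fin d → ℝ) (σ : ℝ) {τ : ℝ}

lemma OmegaMat_inv (hτ : 0 < τ) :
    (OmegaMat d n X σ τ)⁻¹ = (σ ^ 2 * (n : ℝ))⁻¹ • ∑ i, (X i ⬝ᵥ X i)⁻¹ • vecMulVec (X i) (X i)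
      + (2 * τ) • (1 : Matrix (Fin d) (Fin d) ℝ) := by
  have hsum : (∑ i, (X i ⬝ᵥ X i)⁻¹ • vecMulVec (X i) (X i)).PosSemidef :=
    posSemidef_sum _ fun i _ => by
      simpa using (posSemidef_vecMulVec_self_star (X i)).smul
        (inv_nonneg.mpr (sq_nrmX (X i) ▸ sq_nonneg _))
  have hpd := PosDef.posSemidef_add
    (hsum.smul (inv_nonneg.mpr (by positivity : (0 : ℝ) ≤ σ ^ 2 * n)))
    (PosDef.one.smul (by positivity : (0 : ℝ) < 2 * τ))
  exact nonsing_inv_nonsing_inv _ ((isUnit_iff_isUnit_det _).mp hpd.isUnit)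

lemma Rpen_eq (hτ : 0 < τ) (θ : Fin d → ℝ) :
    Rpen d n X σ τ θ
      = (2 * σ ^ 2 * n)⁻¹ * ∑ i, (X i ⬝ᵥ θ) ^ 2 / (X i ⬝ᵥ X i) + τ * (θ ⬝ᵥ θ) := by
  rw [Rpen, OmegaMat_inv X σ hτ]
  simp only [add_mulVec, smul_mulVec, sum_mulVec, vecMulVec_mulVec, one_mulVec, dotProduct_add,
    dotProduct_smul, dotProduct_sum, smul_eq_mul, op_smul_eq_mul, mul_add, Finset.mul_sum]
  congr 1
  · exact Finset.sum_congr rfl fun i _ => by rw [dotProduct_comm θ]; ring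
  · ring

end Penalty

theorem Fobj_eq_Gobj_sub_const_general
    (d n : ℕ) (hn : 0 < n) (X : Fin n → Fin d → ℝ) (hX : ∀ i, X i ≠ 0)
    (y : Fin n → ℝ)
    (σ τ : ℝ) (hσ : 0 < σ) (hτ : 0 < τ) :
    (∀ θ : Fin d → ℝ,
        Fobj d n X y σ τ θ = Gobj d n X y σ τ θ - (1 / 2) * Real.log (2 * π * σ ^ 2)) ∧
      ∀ θstar : Fin d → ℝ,
        (∀ θ, Fobj d n X y σ τ θstar ≤ Fobj d n X y σ τ θ)
          ↔ (∀ θ, Gobj d n X y σ τ θstar ≤ Gobj d n X y σ τ θ) := by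
  have hFG : ∀ θ, Fobj d n X y σ τ θ = Gobj d n X y σ τ θ - (1 / 2) * log (2 * π * σ ^ 2) := by
    intro θ
    simp only [Fobj, Gobj, Rpen_eq X σ hτ, log_integral_sStat _ _ θ hσ.ne',
      log_modelProb (hX _) _ θ hσ.ne', Finset.sum_add_distrib, ← Finset.sum_div, Finset.sum_const,
      Finset.card_univ, Fintype.card_fin, nsmul_eq_mul]
    field_simp
    ring
  exact ⟨hFG, fun θstar => by simp only [hFG, sub_le_sub_iff_right]⟩

/-- In the logistic regression model,
`F(θ) = G(θ) − (1/2) log(2πσ²)` for every `θ`; in particular `F` and `G` differ by a constant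
and have the same minimizers. -/
theorem Fobj_eq_Gobj_sub_const
    (d n : ℕ) (hn : 0 < n) (X : Fin n → Fin d → ℝ) (hX : ∀ i, X i ≠ 0)
    (y : Fin n → ℝ) (hy : ∀ i, y i = 1 ∨ y i = -1)
    (σ τ : ℝ) (hσ : 0 < σ) (hτ : 0 < τ) :
    (∀ θ : Fin d → ℝ,
        Fobj d n X y σ τ θ = Gobj d n X y σ τ θ - (1 / 2) * Real.log (2 * π * σ ^ 2)) ∧
      ∀ θstar : Fin d → ℝ,
        (∀ θ, Fobj d n X y σ τ θstar ≤ Fobj d n X y σ τ θ)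
          ↔ (∀ θ, Gobj d n X y σ τ θstar ≤ Gobj d n X y σ τ θ) :=
  Fobj_eq_Gobj_sub_const_general d n hn X hX y σ τ hσ hτ
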